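/- arXiv:1202.0849 — 2 statements merged into one kernel-verified Lean document; each statement's English description precedes it below -/
import Mathlib

section
/- For every real number t there exists a unique real number s > 1 such that ∑_{n=2}^∞ (log n)^t n^{-s} = 1. -/
open Real Filter

namespace Stmt5Aux

noncomputable def term (t s : ℝ) (n : ℕ) : ℝ :=
  Real.log ((n : ℝ) + 2) ^ t * ((n : ℝ) + 2) ^ (-s)

lemma base_pos (n : ℕ) : (0:ℝ) < (n : ℝ) + 2 := by positivity

lemma one_lt_base (n : ℕ) : (1:ℝ) < (n : ℝ) + 2 := by
  have : (0:ℝ) ≤ n := n.cast_nonneg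
  linarith

lemma log_base_pos (n : ℕ) : 0 < Real.log ((n : ℝ) + 2) :=
  Real.log_pos (one_lt_base n)

lemma term_pos (t s : ℝ) (n : ℕ) : 0 < term t s n :=
  mul_pos (Real.rpow_pos_of_pos (log_base_pos n) t) (Real.rpow_pos_of_pos (base_pos n) _)

lemma term_anti (t : ℝ) {s s' : ℝ} (h : s' ≤ s) (n : ℕ) : term t s n ≤ term t s' n := by
  refine mul_le_mul_of_nonneg_left ?_ (Real.rpow_nonneg (log_base_pos n).le t)
  exact Real.rpow_le_rpow_of_exponent_le (one_lt_base n).le (by linarith)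

lemma summable_term (t : ℝ) {s : ℝ} (hs : 1 < s) : Summable (term t s) := by
  have h2 : (0:ℝ) < (s - 1) / 2 := by linarith
  have htend : Tendsto (fun n : ℕ => (n : ℝ) + 2) atTop atTop :=
    tendsto_atTop_add_const_right _ 2 tendsto_natCast_atTop_atTop
  have h1 : (fun n : ℕ => Real.log ((n : ℝ) + 2) ^ t)
      =o[atTop] fun n : ℕ => ((n : ℝ) + 2) ^ ((s - 1) / 2) :=
    (isLittleO_log_rpow_rpow_atTop t h2).comp_tendsto htend
  have h3 : term t s =O[atTop]
      fun n : ℕ => ((n : ℝ) + 2) ^ ((s - 1) / 2) * ((n : ℝ) + 2) ^ (-s) :=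
    h1.isBigO.mul (Asymptotics.isBigO_refl (fun n : ℕ => ((n : ℝ) + 2) ^ (-s)) atTop)
  have h4 : (fun n : ℕ => ((n : ℝ) + 2) ^ ((s - 1) / 2) * ((n : ℝ) + 2) ^ (-s))
      = fun n : ℕ => ((n : ℝ) + 2) ^ (-((s + 1) / 2)) := by
    funext n
    rw [← Real.rpow_add (base_pos n)]
    ring_nf
  rw [h4] at h3
  have hg : Summable (fun n : ℕ => ((n : ℝ) + 2) ^ (-((s + 1) / 2))) := by
    have h5 : Summable (fun n : ℕ => ((n : ℝ)) ^ (-((s + 1) / 2))) :=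
      Real.summable_nat_rpow.2 (by linarith)
    have h6 := (summable_nat_add_iff 2).2 h5
    refine h6.congr fun n => ?_
    push_cast
    ring_nf
  exact summable_of_isBigO_nat hg h3

lemma tsum_strict_anti (t : ℝ) {s1 s2 : ℝ} (h1 : 1 < s1) (h12 : s1 < s2) :
    ∑' n, term t s2 n < ∑' n, term t s1 n := by
  refine Summable.tsum_lt_tsum_of_nonneg (i := 0) (fun n => (term_pos t s2 n).le)
    (fun n => term_anti t h12.le n) ?_ (summable_term t h1)
  unfold term
  refine mul_lt_mul_of_pos_left ?_ (Real.rpow_pos_of_pos (log_base_pos 0) t)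
  exact Real.rpow_lt_rpow_of_exponent_lt (one_lt_base 0) (by linarith)

/-- Existence of a large `s` with sum `< 1`, relative to a base point. -/
lemma exists_upper (t : ℝ) {s0 : ℝ} (hs0 : 1 < s0) :
    ∃ s : ℝ, s0 ≤ s ∧ ∑' n, term t s n < 1 := by
  obtain ⟨k, hk⟩ := pow_unbounded_of_one_lt (∑' n, term t s0 n) (one_lt_two (α := ℝ))
  refine ⟨s0 + k, le_add_of_nonneg_right (by positivity), ?_⟩
  have hbound : ∀ n, term t (s0 + k) n ≤ term t s0 n * (2 : ℝ) ^ (-(k:ℝ)) := by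
    intro n
    unfold term
    rw [neg_add, Real.rpow_add (base_pos n), ← mul_assoc]
    refine mul_le_mul_of_nonneg_left ?_
      (mul_nonneg (Real.rpow_nonneg (log_base_pos n).le t) (Real.rpow_nonneg (base_pos n).le _))
    -- ((n:ℝ)+2) ^ (-(k:ℝ)) ≤ 2 ^ (-(k:ℝ))
    rw [Real.rpow_neg (base_pos n).le, Real.rpow_neg (by norm_num : (0:ℝ) ≤ 2)]
    refine inv_anti₀ (Real.rpow_pos_of_pos two_pos _) ?_
    exact Real.rpow_le_rpow (by norm_num) (by have : (0:ℝ) ≤ n := n.cast_nonneg; linarith) k.cast_nonneg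
  have hsum : ∑' n, term t (s0 + k) n ≤ ∑' n, term t s0 n * (2 : ℝ) ^ (-(k:ℝ)) := by
    refine Summable.tsum_le_tsum hbound (summable_term t (by linarith)) ?_
    exact (summable_term t hs0).mul_right _
  rw [tsum_mul_right] at hsum
  refine lt_of_le_of_lt hsum ?_
  have h2k : (2:ℝ) ^ (-(k:ℝ)) = ((2:ℝ) ^ k)⁻¹ := by
    rw [Real.rpow_neg (by norm_num), Real.rpow_natCast]
  rw [h2k]
  have hpos : (0:ℝ) < 2 ^ k := by positivity
  rw [← div_eq_mul_inv, div_lt_one hpos]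
  exact hk

lemma continuousOn_tsum_term (t : ℝ) {a b : ℝ} (ha : 1 < a) :
    ContinuousOn (fun s => ∑' n, term t s n) (Set.Icc a b) := by
  refine continuousOn_tsum (u := term t a) (fun n => ?_) (summable_term t ha) ?_
  · -- continuity of s ↦ term t s n on the set
    refine Continuous.continuousOn ?_
    unfold term
    refine continuous_const.mul ?_
    have : (fun s : ℝ => ((n : ℝ) + 2) ^ (-s)) =
        fun s : ℝ => Real.exp (Real.log ((n:ℝ)+2) * (-s)) := by
      funext s
      rw [Real.rpow_def_of_pos (base_pos n)]
    rw [this]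
    exact Real.continuous_exp.comp (continuous_const.mul continuous_neg)
  · intro n s hs
    rw [Real.norm_of_nonneg (term_pos t s n).le]
    exact term_anti t hs.1 n

/-- numeric facts -/
lemma log2_lt : Real.log 2 < 0.6931471808 := Real.log_two_lt_d9

lemma log2_pos' : 0 < Real.log 2 := Real.log_pos one_lt_two

lemma one_le_log3 : 1 ≤ Real.log 3 := by
  rw [Real.le_log_iff_exp_le (by norm_num)]
  exact le_of_lt (lt_of_lt_of_le Real.exp_one_lt_d9 (by norm_num))

lemma term_one_eq (t : ℝ) (n : ℕ) :
    term t 1 n = Real.log ((n:ℝ)+2) ^ t * ((n:ℝ)+2)⁻¹ := by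
  unfold term
  rw [Real.rpow_neg_one]

lemma one_le_log {x : ℝ} (hx : 3 ≤ x) : 1 ≤ Real.log x := by
  have h3 : Real.exp 1 ≤ 3 := Real.exp_one_lt_d9.le.trans (by norm_num)
  rw [Real.le_log_iff_exp_le (by linarith)]
  linarith

lemma log_le_four_log_two {x : ℝ} (hx0 : 0 < x) (hx : x ≤ 16) :
    Real.log x ≤ 4 * Real.log 2 := by
  have h16 : Real.log 16 = 4 * Real.log 2 := by
    rw [show (16:ℝ) = 2 ^ (4:ℕ) by norm_num, Real.log_pow]
    norm_num
  rw [← h16]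
  exact Real.log_le_log hx0 hx

lemma rpow_neg_two_eq {x : ℝ} (hx : 0 < x) : x ^ (-2:ℝ) = (x ^ 2)⁻¹ := by
  rw [show (-2:ℝ) = -((2:ℕ):ℝ) by norm_num, Real.rpow_neg hx.le, Real.rpow_natCast]

/-- main lower bound at s = 1: partial sum over n = 0..8 (i.e. integers 2..10) exceeds 1 -/
lemma partial_sum_one_gt (t : ℝ) : 1 < ∑ n ∈ Finset.range 9, term t 1 n := by
  have hb0 : 0 < Real.log 2 := log2_pos'
  have hbu : Real.log 2 < 0.6931471808 := log2_lt
  have hbl : 0.6931471803 < Real.log 2 := Real.log_two_gt_d9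
  have hb1 : Real.log 2 ≤ 1 := by linarith
  have e0 : term t 1 0 = Real.log 2 ^ t * 2⁻¹ := by rw [term_one_eq]; norm_num
  rcases le_or_gt t (-2) with ht | ht
  · -- single term n = 0 suffices
    have h0 : term t 1 0 ≤ ∑ n ∈ Finset.range 9, term t 1 n :=
      Finset.single_le_sum (f := term t 1) (fun i _ => (term_pos t 1 i).le) (by norm_num)
    refine lt_of_lt_of_le ?_ h0
    rw [e0]
    have h1 : Real.log 2 ^ (-2:ℝ) ≤ Real.log 2 ^ t :=
      Real.rpow_le_rpow_of_exponent_ge hb0 hb1 ht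
    rw [rpow_neg_two_eq hb0] at h1
    have hsq : (Real.log 2) ^ 2 < 2⁻¹ := by nlinarith
    have hsqpos : (0:ℝ) < (Real.log 2) ^ 2 := by positivity
    have h2 : ((2:ℝ)⁻¹)⁻¹ < ((Real.log 2) ^ 2)⁻¹ := inv_strictAnti₀ hsqpos hsq
    norm_num at h2
    nlinarith
  rcases le_or_gt t (-1) with ht1 | ht1
  · -- terms n = 0, 1, 2 (integers 2, 3, 4)
    have hsub : Finset.range 3 ⊆ Finset.range 9 := Finset.range_subset_range.2 (by norm_num)
    have h0 : ∑ n ∈ Finset.range 3, term t 1 n ≤ ∑ n ∈ Finset.range 9, term t 1 n :=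
      Finset.sum_le_sum_of_subset_of_nonneg hsub (fun i _ _ => (term_pos t 1 i).le)
    refine lt_of_lt_of_le ?_ h0
    rw [Finset.sum_range_succ, Finset.sum_range_succ, Finset.sum_range_one]
    have e1 : term t 1 1 = Real.log 3 ^ t * 3⁻¹ := by rw [term_one_eq]; norm_num
    have e2 : term t 1 2 = Real.log 4 ^ t * 4⁻¹ := by rw [term_one_eq]; norm_num
    rw [e0, e1, e2]
    have hlog4 : Real.log 4 = 2 * Real.log 2 := by
      rw [show (4:ℝ) = 2 ^ (2:ℕ) by norm_num, Real.log_pow]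
      norm_num
    have hlog3u : Real.log 3 ≤ 2 * Real.log 2 := by
      rw [← hlog4]
      exact Real.log_le_log (by norm_num) (by norm_num)
    have hlog3l : (1:ℝ) ≤ Real.log 3 := one_le_log le_rfl
    have hlog4l : (1:ℝ) ≤ Real.log 4 := by rw [hlog4]; linarith
    have b0 : Real.log 2 ^ (-1:ℝ) ≤ Real.log 2 ^ t :=
      Real.rpow_le_rpow_of_exponent_ge hb0 hb1 ht1
    rw [Real.rpow_neg_one] at b0
    have b1 : Real.log 3 ^ (-2:ℝ) ≤ Real.log 3 ^ t :=
      Real.rpow_le_rpow_of_exponent_le hlog3l (by linarith)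
    rw [rpow_neg_two_eq (by linarith)] at b1
    have b2 : Real.log 4 ^ (-2:ℝ) ≤ Real.log 4 ^ t :=
      Real.rpow_le_rpow_of_exponent_le hlog4l (by linarith)
    rw [rpow_neg_two_eq (by linarith)] at b2
    -- numeric lower bounds for the inverses
    have i0 : ((0.6931471808:ℝ))⁻¹ ≤ (Real.log 2)⁻¹ := inv_anti₀ hb0 hbu.le
    have i1 : (((2:ℝ) * 0.6931471808) ^ 2)⁻¹ ≤ ((Real.log 3) ^ 2)⁻¹ := by
      apply inv_anti₀ (by positivity)
      nlinarith
    have i2 : (((2:ℝ) * 0.6931471808) ^ 2)⁻¹ ≤ ((Real.log 4) ^ 2)⁻¹ := by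
      apply inv_anti₀ (by positivity)
      nlinarith
    have hnum : (1:ℝ) < (0.6931471808:ℝ)⁻¹ * 2⁻¹
        + (((2:ℝ) * 0.6931471808) ^ 2)⁻¹ * 3⁻¹ + (((2:ℝ) * 0.6931471808) ^ 2)⁻¹ * 4⁻¹ := by
      norm_num
    calc (1:ℝ) < (0.6931471808:ℝ)⁻¹ * 2⁻¹
        + (((2:ℝ) * 0.6931471808) ^ 2)⁻¹ * 3⁻¹ + (((2:ℝ) * 0.6931471808) ^ 2)⁻¹ * 4⁻¹ := hnum
      _ ≤ (Real.log 2)⁻¹ * 2⁻¹ + ((Real.log 3) ^ 2)⁻¹ * 3⁻¹ + ((Real.log 4) ^ 2)⁻¹ * 4⁻¹ := by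
          gcongr <;> norm_num
      _ ≤ Real.log 2 ^ t * 2⁻¹ + Real.log 3 ^ t * 3⁻¹ + Real.log 4 ^ t * 4⁻¹ := by
          gcongr <;> norm_num
  · -- t > -1 : use terms 2..10
    rw [Finset.sum_range_succ']
    have ecast : ∀ n : ℕ, ((n + 1 : ℕ):ℝ) + 2 = (n:ℝ) + 3 := by
      intro n; push_cast; ring
    have hge3 : ∀ n : ℕ, (3:ℝ) ≤ (n:ℝ) + 3 := by
      intro n; have : (0:ℝ) ≤ n := n.cast_nonneg; linarith
    have hL1 : ∀ n : ℕ, 1 ≤ Real.log ((n:ℝ) + 3) := fun n => one_le_log (hge3 n)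
    have hHsum : ∑ n ∈ Finset.range 8, ((n:ℝ) + 3)⁻¹ = 3601 / 2520 := by
      rw [Finset.sum_range_succ, Finset.sum_range_succ, Finset.sum_range_succ,
        Finset.sum_range_succ, Finset.sum_range_succ, Finset.sum_range_succ,
        Finset.sum_range_succ, Finset.sum_range_one]
      norm_num
    rcases le_or_gt t 0 with ht0 | ht0
    · -- -1 < t ≤ 0
      have h0 : (2:ℝ)⁻¹ ≤ term t 1 0 := by
        rw [e0]
        have h1 : (1:ℝ) ≤ Real.log 2 ^ t := by
          have := Real.rpow_le_rpow_of_exponent_ge hb0 hb1 ht0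
          rwa [Real.rpow_zero] at this
        nlinarith
      have hterm : ∀ n ∈ Finset.range 8,
          (4 * Real.log 2)⁻¹ * ((n:ℝ) + 3)⁻¹ ≤ term t 1 (n + 1) := by
        intro n hn
        rw [term_one_eq, ecast n]
        have hub : Real.log ((n:ℝ) + 3) ≤ 4 * Real.log 2 := by
          apply log_le_four_log_two (by linarith [hge3 n])
          have hn8 : (n:ℝ) ≤ 7 := by
            have := Finset.mem_range.1 hn
            exact_mod_cast Nat.lt_succ_iff.1 this
          linarith
        have b : Real.log ((n:ℝ) + 3) ^ (-1:ℝ) ≤ Real.log ((n:ℝ) + 3) ^ t :=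
          Real.rpow_le_rpow_of_exponent_le (hL1 n) (by linarith)
        rw [Real.rpow_neg_one] at b
        have binv : (4 * Real.log 2)⁻¹ ≤ (Real.log ((n:ℝ) + 3))⁻¹ :=
          inv_anti₀ (by linarith [hL1 n]) hub
        exact mul_le_mul_of_nonneg_right (binv.trans b) (by positivity)
      have hsum8 := Finset.sum_le_sum hterm
      rw [← Finset.mul_sum, hHsum] at hsum8
      have hfin : (1:ℝ) < (4 * Real.log 2)⁻¹ * (3601 / 2520) + 2⁻¹ := by
        have i0 : ((4:ℝ) * 0.6931471808)⁻¹ ≤ (4 * Real.log 2)⁻¹ :=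
          inv_anti₀ (by positivity) (by linarith)
        have h' : ((4:ℝ) * 0.6931471808)⁻¹ * (3601 / 2520) ≤ (4 * Real.log 2)⁻¹ * (3601 / 2520) :=
          mul_le_mul_of_nonneg_right i0 (by norm_num)
        nlinarith
      refine lt_of_lt_of_le hfin ?_
      exact add_le_add hsum8 h0
    · -- t > 0
      have h0 : (0:ℝ) ≤ term t 1 0 := (term_pos t 1 0).le
      have hterm : ∀ n ∈ Finset.range 8, ((n:ℝ) + 3)⁻¹ ≤ term t 1 (n + 1) := by
        intro n hn
        rw [term_one_eq, ecast n]
        have h1 : (1:ℝ) ≤ Real.log ((n:ℝ) + 3) ^ t := Real.one_le_rpow (hL1 n) ht0.le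
        calc ((n:ℝ) + 3)⁻¹ = 1 * ((n:ℝ) + 3)⁻¹ := (one_mul _).symm
          _ ≤ Real.log ((n:ℝ) + 3) ^ t * ((n:ℝ) + 3)⁻¹ :=
            mul_le_mul_of_nonneg_right h1 (by positivity)
      have hsum8 := Finset.sum_le_sum hterm
      rw [hHsum] at hsum8
      have : (1:ℝ) < 3601 / 2520 + 0 := by norm_num
      refine lt_of_lt_of_le this ?_
      exact add_le_add hsum8 h0

lemma exists_lower (t : ℝ) : ∃ s : ℝ, 1 < s ∧ 1 < ∑' n, term t s n := by
  -- continuity of the finite partial sum at s = 1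
  have hcont : ContinuousAt (fun s => ∑ n ∈ Finset.range 9, term t s n) 1 := by
    refine Continuous.continuousAt ?_
    refine continuous_finset_sum _ fun n _ => ?_
    unfold term
    refine continuous_const.mul ?_
    have : (fun s : ℝ => ((n : ℝ) + 2) ^ (-s)) =
        fun s : ℝ => Real.exp (Real.log ((n:ℝ)+2) * (-s)) := by
      funext s
      rw [Real.rpow_def_of_pos (base_pos n)]
    rw [this]
    exact Real.continuous_exp.comp (continuous_const.mul continuous_neg)
  have hgt : 1 < (fun s => ∑ n ∈ Finset.range 9, term t s n) 1 := partial_sum_one_gt t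
  have hev : ∀ᶠ s in nhds (1:ℝ), 1 < ∑ n ∈ Finset.range 9, term t s n :=
    hcont.eventually (eventually_gt_nhds hgt) |>.mono fun s h => h
  have hev' : ∀ᶠ s in nhdsWithin (1:ℝ) (Set.Ioi 1),
      (1 < ∑ n ∈ Finset.range 9, term t s n) ∧ 1 < s :=
    (hev.filter_mono nhdsWithin_le_nhds).and (eventually_mem_nhdsWithin.mono fun s hs => hs)
  obtain ⟨s, hsum, hs1⟩ := hev'.exists
  refine ⟨s, hs1, lt_of_lt_of_le hsum ?_⟩
  exact Summable.sum_le_tsum (Finset.range 9) (fun i _ => (term_pos t s i).le) (summable_term t hs1)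

end Stmt5Aux

/-- For every real `t` there exists a unique real `s > 1` such that
`∑_{n=2}^∞ (log n)^t · n^{-s} = 1`. -/
theorem stmt_5 (t : ℝ) :
    ∃! s : ℝ, 1 < s ∧ ∑' n : ℕ, Real.log ((n : ℝ) + 2) ^ t * ((n : ℝ) + 2) ^ (-s) = 1 := by
  have key : ∃! s : ℝ, 1 < s ∧ ∑' n : ℕ, Stmt5Aux.term t s n = 1 := by
    obtain ⟨s0, hs0, hlow⟩ := Stmt5Aux.exists_lower t
    obtain ⟨s1, hs01, hup⟩ := Stmt5Aux.exists_upper t hs0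
    have hivt := intermediate_value_Icc' hs01
      (Stmt5Aux.continuousOn_tsum_term t (b := s1) hs0)
    have hmem : (1:ℝ) ∈ Set.Icc (∑' n, Stmt5Aux.term t s1 n) (∑' n, Stmt5Aux.term t s0 n) :=
      ⟨hup.le, hlow.le⟩
    obtain ⟨c, hc, hfc'⟩ := hivt hmem
    have hfc : ∑' n, Stmt5Aux.term t c n = 1 := hfc'
    have hc1 : 1 < c := lt_of_lt_of_le hs0 hc.1
    refine ⟨c, ⟨hc1, hfc⟩, ?_⟩
    rintro y ⟨hy1, hyeq⟩
    by_contra hne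
    rcases lt_or_gt_of_ne hne with h | h
    · have := Stmt5Aux.tsum_strict_anti t hy1 h
      rw [hyeq, hfc] at this
      exact lt_irrefl 1 this
    · have := Stmt5Aux.tsum_strict_anti t hc1 h
      rw [hyeq, hfc] at this
      exact lt_irrefl 1 this
  simpa only [Stmt5Aux.term] using key
end

section
/- Let s(t) denote, for t ≥ 0, the unique s > 1 with ∑_{n=2}^∞ (log n)^t n^{-s} = 1. Then s is strictly increasing on [0,∞). -/
/-!
Write `x_n = (log n)^t n^{-s}` with `s = s(t)`, so that `∑ x_n = 1`. Comparing the series at `t`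
and `t' > t` term by term fails at `n = 2`, where `log 2 < 1`; instead, since
`(log n)^{t'-t} = exp((t'-t) log log n) ≥ 1 + (t'-t) log log n`, strictly for `n = 3`, the series
at `(t', s)` exceeds `1 + (t'-t) ∑ x_n log log n`, and it suffices that this weighted mean of
`log log n` is nonnegative. Only `n = 2` contributes negatively, with weight
`x_2 ≤ w := 2^{-s} ≤ 1/2`. The rest of the unit mass sits at `n ≥ 3`, where
`log log n ≥ log log 3 > 0`, and the terms `n = 4, 8, 16, 32`, of weight at least `w^2, …, w^5`,
make up the difference: this is a polynomial inequality in `w` on `[0, 1/2]`. Hence the series at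
`(t', s(t))` exceeds `1`, and as it decreases in `s`, `s(t') > s(t)`.
-/

open Real Finset

noncomputable def pressureTerm (t s : ℝ) (n : ℕ) : ℝ :=
  log ((n : ℝ) + 2) ^ t * ((n : ℝ) + 2) ^ (-s)

lemma one_add_mul_log_le_rpow {a : ℝ} (ha : 0 < a) (δ : ℝ) : 1 + δ * log a ≤ a ^ δ := by
  rw [rpow_def_of_pos ha, mul_comm δ]
  linarith [add_one_le_exp (log a * δ)]

lemma one_add_mul_log_lt_rpow {a δ : ℝ} (ha : 0 < a) (h : δ * log a ≠ 0) :
    1 + δ * log a < a ^ δ := by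
  rw [rpow_def_of_pos ha, mul_comm δ]
  linarith [add_one_lt_exp (mul_comm δ (log a) ▸ h)]

lemma Summable.of_tsum_ne_zero {ι α : Type*} [AddCommMonoid α] [TopologicalSpace α] {f : ι → α}
    (h : ∑' i, f i ≠ 0) : Summable f :=
  by_contra fun hf => h (tsum_eq_zero_of_not_summable hf)

lemma neg_lt_log_log_two : -0.367 < log (log 2) := by
  have h2 := log_two_gt_d9
  have hexp : (1.4433 : ℝ) ≤ exp 0.367 :=
    le_trans (by norm_num [Finset.sum_range_succ, Nat.factorial])
      (sum_le_exp_of_nonneg (by norm_num) 5)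
  rw [lt_log_iff_exp_lt (by linarith), show (-0.367 : ℝ) = -(0.367) by norm_num, exp_neg,
    inv_lt_comm₀ (exp_pos _) (by linarith)]
  refine lt_of_lt_of_le ?_ hexp
  rw [inv_lt_comm₀ (by linarith) (by norm_num)]
  norm_num at h2 ⊢
  linarith

lemma lt_log_log_three : 0.092 < log (log 3) := by
  have h3 := log_three_gt_d9
  rw [lt_log_iff_exp_lt (by linarith)]
  refine lt_of_le_of_lt (exp_bound' (by norm_num) (by norm_num) (n := 3) (by norm_num)) ?_
  norm_num [Finset.sum_range_succ, Nat.factorial]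
  linarith

lemma log_log_two_pow {k : ℕ} (hk : k ≠ 0) : log (log (2 ^ k)) = log k + log (log 2) := by
  rw [Real.log_pow, log_mul (by exact_mod_cast hk) (log_pos one_lt_two).ne']

lemma log_log_dyadic_polynomial_nonneg {w : ℝ} (h0 : 0 ≤ w) (h1 : w ≤ 1 / 2) :
    0 ≤ log (log 3) + (log (log 2) - log (log 3)) * w + (log (log 4) - log (log 3)) * w ^ 2
      + (log (log 8) - log (log 3)) * w ^ 3 + (log (log 16) - log (log 3)) * w ^ 4
      + (log (log 32) - log (log 3)) * w ^ 5 := by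
  have h4 := log_log_two_pow (k := 2) (by norm_num)
  have h8 := log_log_two_pow (k := 3) (by norm_num)
  have h16 := log_log_two_pow (k := 4) (by norm_num)
  have h32 := log_log_two_pow (k := 5) (by norm_num)
  norm_num at h4 h8 h16 h32
  have hlog4 : log 4 = 2 * log 2 := by
    rw [show (4 : ℝ) = 2 ^ 2 by norm_num, Real.log_pow]; norm_num
  have hlog5 : log 4 ≤ log 5 := log_le_log (by norm_num) (by norm_num)
  rw [h4, h8, h16, h32, hlog4]
  rw [hlog4] at hlog5
  have hP : w + w ^ 2 + w ^ 3 + w ^ 4 + w ^ 5 ≤ 1 := by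
    nlinarith [pow_le_pow_left₀ h0 h1 2, pow_le_pow_left₀ h0 h1 3, pow_le_pow_left₀ h0 h1 4,
      pow_le_pow_left₀ h0 h1 5]
  -- Its minimum on `[0, 1/2]` is about `0.0024`, attained near `w = 0.3`.
  have hpoly : 0 ≤ 0.092 - 0.459 * w + 0.234 * w ^ 2 + 0.639 * w ^ 3 + 0.927 * (w ^ 4 + w ^ 5) := by
    nlinarith [mul_nonneg h0 (sq_nonneg (w - 0.3)),
      mul_nonneg (mul_nonneg h0 h0) (sq_nonneg (w - 0.3)), pow_nonneg h0 4, pow_nonneg h0 5]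
  nlinarith [pow_nonneg h0 2, pow_nonneg h0 3, pow_nonneg h0 4, pow_nonneg h0 5,
    mul_nonneg (sub_nonneg.2 lt_log_log_three.le) (sub_nonneg.2 hP),
    mul_nonneg (sub_nonneg.2 neg_lt_log_log_two.le)
      (by positivity : 0 ≤ w + w ^ 2 + w ^ 3 + w ^ 4 + w ^ 5),
    mul_nonneg (sub_nonneg.2 log_two_gt_d9.le) (by positivity : 0 ≤ w ^ 2 + 2 * w ^ 4 + 2 * w ^ 5),
    mul_nonneg (sub_nonneg.2 log_three_gt_d9.le) (by positivity : 0 ≤ w ^ 3),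
    mul_nonneg (sub_nonneg.2 hlog5) (by positivity : 0 ≤ w ^ 5)]

lemma one_lt_natCast_add_two (n : ℕ) : (1 : ℝ) < n + 2 := by
  linarith [n.cast_nonneg (α := ℝ)]

lemma three_le_natCast_add_two {n : ℕ} (hn : 1 ≤ n) : (3 : ℝ) ≤ n + 2 := by
  have : (1 : ℝ) ≤ n := by exact_mod_cast hn
  linarith

lemma one_lt_log_natCast_add_two {n : ℕ} (hn : 1 ≤ n) : 1 < log ((n : ℝ) + 2) := by
  linarith [log_three_gt_d9, log_le_log (by norm_num) (three_le_natCast_add_two hn)]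

lemma log_log_three_le_log_log {n : ℕ} (hn : 1 ≤ n) : log (log 3) ≤ log (log ((n : ℝ) + 2)) :=
  log_le_log (log_pos (by norm_num)) (log_le_log (by norm_num) (three_le_natCast_add_two hn))

section PressureTerm

variable {t s : ℝ}

lemma pressureTerm_pos (t s : ℝ) (n : ℕ) : 0 < pressureTerm t s n :=
  mul_pos (rpow_pos_of_pos (log_pos (one_lt_natCast_add_two n)) t)
    (rpow_pos_of_pos (by linarith [one_lt_natCast_add_two n]) _)

lemma pressureTerm_le_of_le {s' : ℝ} (h : s ≤ s') (n : ℕ) :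
    pressureTerm t s' n ≤ pressureTerm t s n :=
  mul_le_mul_of_nonneg_left
    (rpow_le_rpow_of_exponent_le (one_lt_natCast_add_two n).le (neg_le_neg h))
    (rpow_nonneg (log_pos (one_lt_natCast_add_two n)).le t)

lemma pressureTerm_eq_mul_rpow (t t' s : ℝ) (n : ℕ) :
    pressureTerm t' s n = pressureTerm t s n * log ((n : ℝ) + 2) ^ (t' - t) := by
  rw [pressureTerm, pressureTerm, mul_right_comm, ← rpow_add (log_pos (one_lt_natCast_add_two n)),
    add_sub_cancel]

lemma pressureTerm_zero_le (ht : 0 ≤ t) : pressureTerm t s 0 ≤ 2 ^ (-s) := by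
  have hlog2 : log 2 ^ t ≤ 1 :=
    rpow_le_one (log_nonneg one_le_two) (by linarith [log_two_lt_d9]) ht
  simpa [pressureTerm] using mul_le_of_le_one_left (rpow_nonneg zero_le_two _) hlog2

lemma rpow_neg_le_pressureTerm (ht : 0 ≤ t) {n : ℕ} (hn : 1 ≤ n) :
    ((n : ℝ) + 2) ^ (-s) ≤ pressureTerm t s n :=
  le_mul_of_one_le_left (rpow_nonneg (by linarith [one_lt_natCast_add_two n]) _)
    (one_le_rpow (one_lt_log_natCast_add_two hn).le ht)

theorem tsum_log_log_mul_pressureTerm_nonneg (ht : 0 ≤ t) (hs : 1 ≤ s)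
    (hsum : ∑' n, pressureTerm t s n = 1)
    (hL : Summable fun n : ℕ => log (log ((n : ℝ) + 2)) * pressureTerm t s n) :
    0 ≤ ∑' n : ℕ, log (log ((n : ℝ) + 2)) * pressureTerm t s n := by
  set f : ℕ → ℝ := fun n => (log (log ((n : ℝ) + 2)) - log (log 3)) * pressureTerm t s n
  have hx : Summable (pressureTerm t s) := .of_tsum_ne_zero (by rw [hsum]; exact one_ne_zero)
  have hf : Summable f := (hL.sub (hx.mul_left _)).congr fun n => by ring
  have hsplit : ∑' n : ℕ, log (log ((n : ℝ) + 2)) * pressureTerm t s n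
      = log (log 3) + ∑' n, f n := by
    rw [← mul_one (log (log 3)), ← hsum, ← tsum_mul_left, ← (hx.mul_left _).tsum_add hf]
    exact tsum_congr fun n => by ring
  -- Keep the negative term `n + 2 = 2` and the terms `n + 2 = 4, 8, 16, 32`.
  have hdrop : ∑ n ∈ {0, 2, 6, 14, 30}, f n ≤ ∑' n, f n :=
    hf.sum_le_tsum _ fun n hn =>
      have hn1 : 1 ≤ n := Nat.one_le_iff_ne_zero.2 (by rintro rfl; simp at hn)
      mul_nonneg (sub_nonneg.2 (log_log_three_le_log_log hn1)) (pressureTerm_pos t s n).le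
  have hdrop_eq : ∑ n ∈ {0, 2, 6, 14, 30}, f n = f 0 + f 2 + f 6 + f 14 + f 30 := by
    simp [add_assoc]
  set w : ℝ := 2 ^ (-s)
  have hw0 : 0 ≤ w := rpow_nonneg zero_le_two _
  have hw1 : w ≤ 1 / 2 := by
    simpa [w, rpow_neg_one] using rpow_le_rpow_of_exponent_le one_le_two (neg_le_neg hs)
  have hf0 : (log (log 2) - log (log 3)) * w ≤ f 0 := by
    have : log (log 2) ≤ log (log 3) :=
      log_le_log (log_pos one_lt_two) (log_le_log two_pos (by norm_num))
    simpa [f] using mul_le_mul_of_nonpos_left (pressureTerm_zero_le ht) (sub_nonpos.2 this)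
  have hf_dyadic : ∀ n k : ℕ, 1 ≤ n → (n : ℝ) + 2 = 2 ^ k →
      (log (log ((n : ℝ) + 2)) - log (log 3)) * w ^ k ≤ f n := by
    intro n k hn hnk
    rw [show w ^ k = ((n : ℝ) + 2) ^ (-s) by rw [hnk]; exact rpow_pow_comm zero_le_two _ _]
    exact mul_le_mul_of_nonneg_left (rpow_neg_le_pressureTerm ht hn)
      (sub_nonneg.2 (log_log_three_le_log_log hn))
  have h4 := hf_dyadic 2 2 (by norm_num) (by norm_num)
  have h8 := hf_dyadic 6 3 (by norm_num) (by norm_num)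
  have h16 := hf_dyadic 14 4 (by norm_num) (by norm_num)
  have h32 := hf_dyadic 30 5 (by norm_num) (by norm_num)
  norm_num at h4 h8 h16 h32
  linarith [log_log_dyadic_polynomial_nonneg hw0 hw1]

theorem one_lt_tsum_pressureTerm_of_lt {t' : ℝ} (ht : 0 ≤ t) (hs : 1 ≤ s) (htt' : t < t')
    (hsum : ∑' n, pressureTerm t s n = 1) (hsum' : Summable (pressureTerm t' s)) :
    1 < ∑' n, pressureTerm t' s n := by
  set δ := t' - t
  have hδ : 0 < δ := sub_pos.2 htt'
  have hx : Summable (pressureTerm t s) := .of_tsum_ne_zero (by rw [hsum]; exact one_ne_zero)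
  have hlog_pos (n : ℕ) : 0 < log ((n : ℝ) + 2) := log_pos (one_lt_natCast_add_two n)
  have hlower (n : ℕ) : pressureTerm t s n + δ * (log (log ((n : ℝ) + 2)) * pressureTerm t s n)
      ≤ pressureTerm t' s n := by
    rw [pressureTerm_eq_mul_rpow t t' s n]
    nlinarith [one_add_mul_log_le_rpow (hlog_pos n) δ, pressureTerm_pos t s n]
  have hlower_one : pressureTerm t s 1 + δ * (log (log ((1 : ℕ) + 2)) * pressureTerm t s 1)
      < pressureTerm t' s 1 := by
    have hl3 : 0 < log (log ((1 : ℕ) + 2)) := by norm_num; linarith [lt_log_log_three]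
    rw [pressureTerm_eq_mul_rpow t t' s 1]
    nlinarith [one_add_mul_log_lt_rpow (hlog_pos 1) (mul_pos hδ hl3).ne', pressureTerm_pos t s 1]
  have hL : Summable fun n : ℕ => log (log ((n : ℝ) + 2)) * pressureTerm t s n := by
    refine (summable_nat_add_iff 1).1 ((summable_mul_left_iff hδ.ne').1 ?_)
    refine .of_nonneg_of_le (fun n => ?_) (fun n => ?_) ((summable_nat_add_iff 1).2 (hsum'.sub hx))
    · exact mul_nonneg hδ.le (mul_nonneg
        (log_nonneg (one_lt_log_natCast_add_two (Nat.le_add_left 1 n)).le)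
        (pressureTerm_pos t s _).le)
    · linarith [hlower (n + 1)]
  calc 1 ≤ 1 + δ * ∑' n : ℕ, log (log ((n : ℝ) + 2)) * pressureTerm t s n := by
        nlinarith [tsum_log_log_mul_pressureTerm_nonneg ht hs hsum hL]
    _ = ∑' n, (pressureTerm t s n + δ * (log (log ((n : ℝ) + 2)) * pressureTerm t s n)) := by
        rw [hx.tsum_add (hL.mul_left δ), tsum_mul_left, hsum]
    _ < ∑' n, pressureTerm t' s n := (hx.add (hL.mul_left δ)).tsum_lt_tsum hlower hlower_one hsum'

end PressureTerm

/-- If `s t` denotes, for `t ≥ 0`, the unique `s > 1` with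
`∑_{n=2}^∞ (log n)^t n^{-s} = 1`, then `s` is strictly increasing on `[0,∞)`. -/
theorem stmt_6 (s : ℝ → ℝ)
    (hs : ∀ t : ℝ, 0 ≤ t →
      1 < s t ∧ ∑' n : ℕ, Real.log ((n : ℝ) + 2) ^ t * ((n : ℝ) + 2) ^ (-(s t)) = 1) :
    StrictMonoOn s (Set.Ici (0 : ℝ)) := by
  intro t ht t' ht' htt'
  obtain ⟨hst, hsum⟩ := hs t ht
  obtain ⟨-, hsum'⟩ := hs t' ht'
  change ∑' n, pressureTerm t (s t) n = 1 at hsum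
  change ∑' n, pressureTerm t' (s t') n = 1 at hsum'
  by_contra! hle
  have hsummable' : Summable (pressureTerm t' (s t')) :=
    .of_tsum_ne_zero (by rw [hsum']; exact one_ne_zero)
  have hcomp := pressureTerm_le_of_le (t := t') hle
  have hsummable : Summable (pressureTerm t' (s t)) :=
    hsummable'.of_nonneg_of_le (fun n => (pressureTerm_pos _ _ n).le) hcomp
  linarith [one_lt_tsum_pressureTerm_of_lt ht hst.le htt' hsum hsummable,
    hsummable.tsum_le_tsum hcomp hsummable']
end
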